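/- arXiv:2409.17762 — 4 statements merged into one kernel-verified Lean document; each statement's English description precedes it below -/
import Mathlib

section
/- (Bohr's inequality.) If f is holomorphic on the open unit disc 𝔻 with |f(z)| ≤ 1 for every z ∈ 𝔻, and f(z) = Σ_{n=0}^∞ a_n z^n is its Taylor expansion at 0, then Σ_{n=0}^∞ |a_n| r^n ≤ 1 for every real r with 0 ≤ r ≤ 1/3. -/
/-!
For `N ≥ 1`, averaging `f` over the rotations `z ↦ ωᵏ z` by the `N`-th roots of unity leaves
only the terms of the Taylor series with exponent divisible by `N`: the average is `G (z ^ N)`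
with `G w = Σ a_{Nm} wᵐ`. So `G` is again a holomorphic self-map of the closed unit disc, with
`G 0 = a₀` and `G' 0 = a_N`, and the Schwarz–Pick inequality `|G' 0| ≤ 1 - |G 0|²` gives
Wiener's bound `|a_N| ≤ 1 - |a₀|²`. Summing it, for `r ≤ 1/3`,
`Σ |aₙ| rⁿ ≤ |a₀| + (1 - |a₀|²) r / (1 - r) ≤ |a₀| + (1 - |a₀|²) / 2 = 1 - (1 - |a₀|)² / 2 ≤ 1`.
-/

open Metric Complex Set ComplexConjugate Finset
open scoped NNReal ENNReal

namespace Complex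

noncomputable def blaschkeFactor (b w : ℂ) : ℂ := (w - b) / (1 - conj b * w)

variable {b w : ℂ}

lemma one_sub_conj_mul_ne_zero (hb : ‖b‖ < 1) (hw : ‖w‖ ≤ 1) : 1 - conj b * w ≠ 0 := by
  refine sub_ne_zero.mpr fun h => ?_
  have : ‖conj b * w‖ < 1 := by
    rw [norm_mul, RCLike.norm_conj]
    nlinarith [norm_nonneg b, norm_nonneg w]
  simp [← h] at this

lemma blaschkeFactor_self : blaschkeFactor b b = 0 := by
  simp [blaschkeFactor]

lemma norm_blaschkeFactor_le_one (hb : ‖b‖ < 1) (hw : ‖w‖ ≤ 1) : ‖blaschkeFactor b w‖ ≤ 1 := by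
  have hden := one_sub_conj_mul_ne_zero hb hw
  have key : normSq (1 - conj b * w) - normSq (w - b) = (1 - normSq b) * (1 - normSq w) := by
    simp only [normSq_apply, sub_re, sub_im, mul_re, mul_im, conj_re, conj_im, one_re, one_im]
    ring
  have hb2 : normSq b ≤ 1 := by rw [normSq_eq_norm_sq]; nlinarith [norm_nonneg b]
  have hw2 : normSq w ≤ 1 := by rw [normSq_eq_norm_sq]; nlinarith [norm_nonneg w]
  rw [blaschkeFactor, norm_div, div_le_one (norm_pos_iff.mpr hden), norm_def, norm_def]
  exact Real.sqrt_le_sqrt (by nlinarith)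

lemma hasDerivAt_blaschkeFactor_self (hb : ‖b‖ < 1) :
    HasDerivAt (blaschkeFactor b) (((1 - ‖b‖ ^ 2 : ℝ) : ℂ)⁻¹) b := by
  have hden := one_sub_conj_mul_ne_zero hb hb.le
  have hconj : 1 - conj b * b = ((1 - ‖b‖ ^ 2 : ℝ) : ℂ) := by
    rw [mul_comm, mul_conj']; push_cast; ring
  have := ((hasDerivAt_id b).sub_const b).div
    (((hasDerivAt_id b).const_mul (conj b)).const_sub 1) hden
  refine this.congr_deriv ?_
  simp only [id, sub_self, zero_mul, sub_zero, one_mul, hconj]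
  rw [hconj] at hden
  field_simp

lemma differentiableAt_blaschkeFactor (hb : ‖b‖ < 1) (hw : ‖w‖ ≤ 1) :
    DifferentiableAt ℂ (blaschkeFactor b) w :=
  (differentiableAt_id.sub_const b).div
    ((differentiableAt_id.const_mul _).const_sub 1) (one_sub_conj_mul_ne_zero hb hw)

end Complex

lemma norm_deriv_le_one_sub_norm_sq_div_of_mapsTo_ball {g : ℂ → ℂ} {c : ℂ} {R : ℝ}
    (hd : DifferentiableOn ℂ g (ball c R)) (hg : MapsTo g (ball c R) (closedBall 0 1))
    (hR : 0 < R) : ‖deriv g c‖ ≤ (1 - ‖g c‖ ^ 2) / R := by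
  have hc : c ∈ ball c R := mem_ball_self hR
  have hgz : ∀ z ∈ ball c R, ‖g z‖ ≤ 1 := fun z hz => by simpa using hg hz
  rcases (hgz c hc).lt_or_eq with hlt | heq
  · set ψ := blaschkeFactor (g c) ∘ g
    have hψd : DifferentiableOn ℂ ψ (ball c R) := fun z hz =>
      (differentiableAt_blaschkeFactor hlt (hgz z hz)).comp_differentiableWithinAt z (hd z hz)
    have hψ : MapsTo ψ (ball c R) (closedBall (ψ c) 1) := fun z hz => by
      simpa [ψ, blaschkeFactor_self] using norm_blaschkeFactor_le_one hlt (hgz z hz)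
    have hψ' : HasDerivAt ψ (((1 - ‖g c‖ ^ 2 : ℝ) : ℂ)⁻¹ * deriv g c) c :=
      (hasDerivAt_blaschkeFactor_self hlt).comp c
        (hd.differentiableAt (isOpen_ball.mem_nhds hc)).hasDerivAt
    have hpos : 0 < 1 - ‖g c‖ ^ 2 := by nlinarith [norm_nonneg (g c)]
    have hschwarz := norm_deriv_le_div_of_mapsTo_ball hψd hψ hR
    rw [hψ'.deriv, norm_mul, norm_inv, norm_real, Real.norm_of_nonneg hpos.le,
      inv_mul_le_iff₀ hpos] at hschwarz
    rwa [mul_one_div] at hschwarz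
  · have hmax : IsMaxOn (norm ∘ g) (ball c R) c := fun z hz => by
      simpa [heq] using hgz z hz
    have hconst : g =ᶠ[nhds c] fun _ => g c := by
      filter_upwards [isOpen_ball.mem_nhds hc] with z hz using
        Complex.eqOn_of_isPreconnected_of_isMaxOn_norm (convex_ball c R).isPreconnected
          isOpen_ball hd hc hmax hz
    simp [hconst.deriv_eq, heq]

lemma hasFPowerSeriesOnBall_ofScalars_of_hasSum {b : ℕ → ℂ} {g : ℂ → ℂ} {R : ℝ≥0} (hR : 0 < R)
    (h : ∀ z ∈ ball (0 : ℂ) R, HasSum (fun n => b n * z ^ n) (g z)) :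
    HasFPowerSeriesOnBall g (FormalMultilinearSeries.ofScalars ℂ b) 0 R := by
  have hradius : (R : ℝ≥0∞) ≤ (FormalMultilinearSeries.ofScalars ℂ b).radius := by
    refine ENNReal.le_of_forall_nnreal_lt fun ρ hρ =>
      (FormalMultilinearSeries.ofScalars ℂ b).le_radius_of_tendsto (l := 0) ?_
    have hρR : (ρ : ℂ) ∈ ball (0 : ℂ) R := by simpa using hρ
    simpa [FormalMultilinearSeries.ofScalars_norm, norm_mul] using
      (h _ hρR).summable.tendsto_atTop_zero.norm
  refine ⟨hradius, by exact_mod_cast hR, fun {y} hy => ?_⟩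
  rw [eball_coe] at hy
  simpa [FormalMultilinearSeries.ofScalars_apply_eq, mul_comm] using h y hy

lemma IsPrimitiveRoot.geom_sum_pow_eq_ite {R : Type*} [CommRing R] [IsDomain R] {ζ : R} {N : ℕ}
    (hζ : IsPrimitiveRoot ζ N) (j : ℕ) :
    ∑ k ∈ range N, (ζ ^ j) ^ k = if N ∣ j then (N : R) else 0 := by
  split_ifs with hj
  · simp [(hζ.pow_eq_one_iff_dvd j).mpr hj]
  · have hne : ζ ^ j - 1 ≠ 0 := sub_ne_zero.mpr fun h => hj ((hζ.pow_eq_one_iff_dvd j).mp h)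
    refine (mul_eq_zero.mp ?_).resolve_right hne
    rw [geom_sum_mul, ← pow_mul, mul_comm, pow_mul, hζ.pow_eq_one, one_pow, sub_self]

lemma hasSum_coeff_mul_pow_of_average_rotations {a : ℕ → ℂ} {f : ℂ → ℂ} {ω z : ℂ} {N : ℕ}
    (hN : 0 < N) (hω : IsPrimitiveRoot ω N)
    (ha : ∀ k ∈ range N, HasSum (fun n => a n * (ω ^ k * z) ^ n) (f (ω ^ k * z))) :
    HasSum (fun m => a (N * m) * (z ^ N) ^ m) ((N : ℂ)⁻¹ * ∑ k ∈ range N, f (ω ^ k * z)) := by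
  have hsum := (hasSum_sum ha).mul_left (N : ℂ)⁻¹
  have hfilter : ∀ n, (N : ℂ)⁻¹ * ∑ k ∈ range N, a n * (ω ^ k * z) ^ n
      = if N ∣ n then a n * z ^ n else 0 := fun n => by
    have hN' : (N : ℂ) ≠ 0 := by exact_mod_cast hN.ne'
    have hfactor : ∑ k ∈ range N, a n * (ω ^ k * z) ^ n
        = a n * z ^ n * ∑ k ∈ range N, (ω ^ n) ^ k := by
      rw [mul_sum]
      exact sum_congr rfl fun k _ => by ring
    rw [hfactor, hω.geom_sum_pow_eq_ite n]
    split_ifs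
    · field_simp
    · simp
  simp_rw [hfilter] at hsum
  refine ((mul_right_injective₀ hN.ne').hasSum_iff fun n hn => ?_).mpr hsum |>.congr_fun ?_
  · exact if_neg fun ⟨m, hm⟩ => hn ⟨m, hm.symm⟩
  · intro m
    simp [pow_mul]

lemma norm_coeff_le_one_sub_norm_coeff_zero_sq {f : ℂ → ℂ} {a : ℕ → ℂ}
    (hb : ∀ z ∈ ball (0 : ℂ) 1, ‖f z‖ ≤ 1)
    (ha : ∀ z ∈ ball (0 : ℂ) 1, HasSum (fun n => a n * z ^ n) (f z)) {N : ℕ} (hN : 0 < N) :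
    ‖a N‖ ≤ 1 - ‖a 0‖ ^ 2 := by
  obtain ⟨ω, hω⟩ : ∃ ω : ℂ, IsPrimitiveRoot ω N := ⟨_, isPrimitiveRoot_exp N hN.ne'⟩
  have hG : ∀ w ∈ ball (0 : ℂ) 1, ∃ s, HasSum (fun m => a (N * m) * w ^ m) s ∧ ‖s‖ ≤ 1 := by
    intro w hw
    obtain ⟨z, rfl⟩ := IsAlgClosed.exists_pow_nat_eq w hN
    have hz : ∀ k, ω ^ k * z ∈ ball (0 : ℂ) 1 := fun k => by
      rw [mem_ball_zero_iff, norm_pow, pow_lt_one_iff_of_nonneg (norm_nonneg z) hN.ne'] at hw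
      simpa [hω.norm'_eq_one hN.ne'] using hw
    refine ⟨_, hasSum_coeff_mul_pow_of_average_rotations hN hω fun k _ => ha _ (hz k), ?_⟩
    have hN' : (0 : ℝ) < N := by exact_mod_cast hN
    calc ‖(N : ℂ)⁻¹ * ∑ k ∈ range N, f (ω ^ k * z)‖
        ≤ (N : ℝ)⁻¹ * ∑ k ∈ range N, ‖f (ω ^ k * z)‖ := by
          rw [norm_mul, norm_inv, Complex.norm_natCast]
          gcongr
          exact norm_sum_le _ _
      _ ≤ (N : ℝ)⁻¹ * ∑ k ∈ range N, 1 := by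
          gcongr with k
          exact hb _ (hz k)
      _ = 1 := by simp [hN'.ne']
  choose! G hG hGle using hG
  have hps := hasFPowerSeriesOnBall_ofScalars_of_hasSum (R := 1) one_pos (by simpa using hG)
  have hderiv : deriv G 0 = a N := by
    simpa [FormalMultilinearSeries.coeff_ofScalars] using hps.hasFPowerSeriesAt.deriv
  have hG0 : G 0 = a 0 := by
    simpa using (hG 0 (mem_ball_self one_pos)).unique (hasSum_single 0 fun m hm => by simp [hm])
  have hd : DifferentiableOn ℂ G (ball 0 1) := by
    simpa only [eball_coe, NNReal.coe_one] using hps.differentiableOn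
  simpa [hderiv, hG0] using norm_deriv_le_one_sub_norm_sq_div_of_mapsTo_ball hd
    (fun w hw => by simpa using hGle w hw) one_pos

lemma tsum_mul_pow_le_one_of_le_one_sub_sq {c : ℕ → ℝ} (hc : ∀ n, 0 ≤ c n)
    (hcn : ∀ n, 0 < n → c n ≤ 1 - c 0 ^ 2) {r : ℝ} (hr0 : 0 ≤ r) (hr : r ≤ 1 / 3) :
    ∑' n, c n * r ^ n ≤ 1 := by
  have hr1 : r < 1 := by linarith
  have hs : 0 ≤ 1 - c 0 ^ 2 := (hc 1).trans (hcn 1 one_pos)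
  have hc1 : ∀ n, c n ≤ 1 := fun n => by
    rcases n.eq_zero_or_pos with rfl | hn
    · nlinarith [hc 0]
    · nlinarith [hcn n hn, sq_nonneg (c 0)]
  have hgeom := summable_geometric_of_lt_one hr0 hr1
  have hsum : Summable fun n => c n * r ^ n :=
    hgeom.of_nonneg_of_le (fun n => mul_nonneg (hc n) (pow_nonneg hr0 n))
      fun n => mul_le_of_le_one_left (pow_nonneg hr0 n) (hc1 n)
  have htail : ∑' n, c (n + 1) * r ^ (n + 1) ≤ (1 - c 0 ^ 2) * (r * (1 - r)⁻¹) :=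
    calc ∑' n, c (n + 1) * r ^ (n + 1)
        ≤ ∑' n, (1 - c 0 ^ 2) * r * r ^ n :=
          ((summable_nat_add_iff 1).mpr hsum).tsum_le_tsum (fun n => by
            rw [pow_succ', mul_assoc]
            exact mul_le_mul_of_nonneg_right (hcn _ n.succ_pos) (by positivity))
            (hgeom.mul_left _)
      _ = (1 - c 0 ^ 2) * (r * (1 - r)⁻¹) := by
          rw [tsum_mul_left, tsum_geometric_of_lt_one hr0 hr1, mul_assoc]
  have hratio : r * (1 - r)⁻¹ ≤ 1 / 2 := by
    rw [mul_inv_le_iff₀ (by linarith)]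
    linarith
  calc ∑' n, c n * r ^ n = c 0 + ∑' n, c (n + 1) * r ^ (n + 1) := by
        rw [hsum.tsum_eq_zero_add, pow_zero, mul_one]
    _ ≤ c 0 + (1 - c 0 ^ 2) * (1 / 2) := by gcongr; exact htail.trans (by gcongr)
    _ ≤ 1 := by nlinarith [sq_nonneg (1 - c 0)]

theorem bohr_inequality_general (f : ℂ → ℂ)
    (hb : ∀ z ∈ ball (0 : ℂ) 1, ‖f z‖ ≤ 1)
    (a : ℕ → ℂ)
    (ha : ∀ z ∈ ball (0 : ℂ) 1, HasSum (fun n : ℕ => a n * z ^ n) (f z))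
    (r : ℝ) (hr0 : 0 ≤ r) (hr : r ≤ 1 / 3) :
    ∑' n : ℕ, ‖a n‖ * r ^ n ≤ 1 :=
  tsum_mul_pow_le_one_of_le_one_sub_sq (fun n => norm_nonneg (a n))
    (fun _ hn => norm_coeff_le_one_sub_norm_coeff_zero_sq hb ha hn) hr0 hr

/-- **Bohr's inequality.** If `f` is holomorphic on the open unit disc with `‖f z‖ ≤ 1`
for every `z` in the disc, and `f z = Σ aₙ zⁿ` is its Taylor expansion at `0`, then
`Σ ‖aₙ‖ rⁿ ≤ 1` for every real `0 ≤ r ≤ 1/3`. -/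
theorem bohr_inequality (f : ℂ → ℂ)
    (hd : DifferentiableOn ℂ f (ball (0 : ℂ) 1))
    (hb : ∀ z ∈ ball (0 : ℂ) 1, ‖f z‖ ≤ 1)
    (a : ℕ → ℂ)
    (ha : ∀ z ∈ ball (0 : ℂ) 1, HasSum (fun n : ℕ => a n * z ^ n) (f z))
    (r : ℝ) (hr0 : 0 ≤ r) (hr : r ≤ 1 / 3) :
    ∑' n : ℕ, ‖a n‖ * r ^ n ≤ 1 :=
  bohr_inequality_general f hb a ha r hr0 hr
end

section
/- (Sharpness of the Bohr radius 1/3.) For every real r with 1/3 < r < 1 there exists a holomorphic function f on 𝔻 with |f(z)| ≤ 1 for all z ∈ 𝔻 whose Taylor coefficients a_n at 0 satisfy Σ_{n=0}^∞ |a_n| r^n > 1. -/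
/-!
The disc automorphism `φ_a z = (a - z) / (1 - conj a * z)` maps the unit disc into itself, and
expanding `(1 - conj a * z)⁻¹` as a geometric series gives the coefficients `a` and
`-(1 - ‖a‖²) (conj a)ⁿ⁻¹`. Hence `Σ ‖aₙ‖ rⁿ = ‖a‖ + (1 - ‖a‖²) r / (1 - ‖a‖ r)`, which exceeds `1`
exactly when `r (1 + 2‖a‖) > 1`; for `r > 1/3` this holds for some real `a < 1`.
-/

open Metric ComplexConjugate

namespace Complex

noncomputable def mobius (a z : ℂ) : ℂ := (a - z) / (1 - conj a * z)

noncomputable def mobiusCoeff (a : ℂ) : ℕ → ℂ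
  | 0 => a
  | n + 1 => -((1 - ‖a‖ ^ 2 : ℝ) : ℂ) * conj a ^ n

theorem normSq_one_sub_conj_mul_sub_normSq_sub (a z : ℂ) :
    normSq (1 - conj a * z) - normSq (a - z) = (1 - normSq a) * (1 - normSq z) := by
  simp only [normSq_apply, sub_re, sub_im, mul_re, mul_im, conj_re, conj_im, one_re, one_im]
  ring

theorem norm_sub_le_norm_one_sub_conj_mul {a z : ℂ} (ha : ‖a‖ ≤ 1) (hz : ‖z‖ ≤ 1) :
    ‖a - z‖ ≤ ‖1 - conj a * z‖ := by
  have key := normSq_one_sub_conj_mul_sub_normSq_sub a z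
  simp only [normSq_eq_norm_sq] at key
  have hnonneg : 0 ≤ (1 - ‖a‖ ^ 2) * (1 - ‖z‖ ^ 2) := by
    apply mul_nonneg <;> nlinarith [norm_nonneg a, norm_nonneg z]
  exact pow_le_pow_iff_left₀ (norm_nonneg _) (norm_nonneg _) two_ne_zero |>.1 (by linarith)

theorem norm_conj_mul_lt_one {a z : ℂ} (ha : ‖a‖ ≤ 1) (hz : ‖z‖ < 1) : ‖conj a * z‖ < 1 := by
  rw [norm_mul, norm_conj]
  nlinarith [norm_nonneg a, norm_nonneg z]

theorem one_sub_conj_mul_ne_zero_s1 {a z : ℂ} (ha : ‖a‖ ≤ 1) (hz : ‖z‖ < 1) :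
    1 - conj a * z ≠ 0 := by
  intro h
  have := norm_conj_mul_lt_one ha hz
  rw [← sub_eq_zero.1 h, norm_one] at this
  exact this.false

theorem differentiableOn_mobius {a : ℂ} (ha : ‖a‖ ≤ 1) :
    DifferentiableOn ℂ (mobius a) (ball 0 1) := by
  refine DifferentiableOn.div (by fun_prop) (by fun_prop) fun z hz => ?_
  exact one_sub_conj_mul_ne_zero_s1 ha (mem_ball_zero_iff.1 hz)

theorem norm_mobius_le_one {a z : ℂ} (ha : ‖a‖ ≤ 1) (hz : ‖z‖ < 1) : ‖mobius a z‖ ≤ 1 := by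
  rw [mobius, norm_div, div_le_one (norm_pos_iff.2 (one_sub_conj_mul_ne_zero_s1 ha hz))]
  exact norm_sub_le_norm_one_sub_conj_mul ha hz.le

theorem mobiusCoeff_zero (a : ℂ) : mobiusCoeff a 0 = a := rfl

theorem mobiusCoeff_succ (a : ℂ) (n : ℕ) :
    mobiusCoeff a (n + 1) = -((1 - ‖a‖ ^ 2 : ℝ) : ℂ) * conj a ^ n := rfl

theorem mobius_eq_sub_div {a z : ℂ} (hz : 1 - conj a * z ≠ 0) :
    mobius a z = a - ((1 - ‖a‖ ^ 2 : ℝ) : ℂ) * z / (1 - conj a * z) := by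
  have hnorm : a * conj a = ((‖a‖ ^ 2 : ℝ) : ℂ) := by rw [mul_conj, normSq_eq_norm_sq]
  rw [mobius, eq_sub_iff_add_eq, div_add_div _ _ hz hz, div_eq_iff (mul_ne_zero hz hz)]
  push_cast at hnorm ⊢
  linear_combination (1 - conj a * z) * z * hnorm

theorem hasSum_mobiusCoeff_mul_pow {a z : ℂ} (ha : ‖a‖ ≤ 1) (hz : ‖z‖ < 1) :
    HasSum (fun n => mobiusCoeff a n * z ^ n) (mobius a z) := by
  have hterm : (fun n => mobiusCoeff a (n + 1) * z ^ (n + 1))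
      = fun n => -((1 - ‖a‖ ^ 2 : ℝ) : ℂ) * z * (conj a * z) ^ n := by
    funext n
    rw [mobiusCoeff_succ]
    ring
  have htail := (hasSum_geometric_of_norm_lt_one (norm_conj_mul_lt_one ha hz)).mul_left
    (-((1 - ‖a‖ ^ 2 : ℝ) : ℂ) * z)
  rw [← hterm, ← div_eq_mul_inv, neg_mul, neg_div] at htail
  rw [mobius_eq_sub_div (one_sub_conj_mul_ne_zero_s1 ha hz), sub_eq_add_neg]
  simpa only [mobiusCoeff_zero, pow_zero, mul_one] using
    HasSum.zero_add (f := fun n => mobiusCoeff a n * z ^ n) htail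

theorem norm_mobiusCoeff_succ {a : ℂ} (ha : ‖a‖ ≤ 1) (n : ℕ) :
    ‖mobiusCoeff a (n + 1)‖ = (1 - ‖a‖ ^ 2) * ‖a‖ ^ n := by
  have hnonneg : 0 ≤ 1 - ‖a‖ ^ 2 := by nlinarith [norm_nonneg a]
  rw [mobiusCoeff_succ, norm_mul, norm_neg, norm_real, Real.norm_of_nonneg hnonneg, norm_pow,
    norm_conj]

theorem hasSum_norm_mobiusCoeff_mul_pow {a : ℂ} {r : ℝ} (ha : ‖a‖ ≤ 1) (hr : 0 ≤ r)
    (har : ‖a‖ * r < 1) :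
    HasSum (fun n => ‖mobiusCoeff a n‖ * r ^ n) (‖a‖ + (1 - ‖a‖ ^ 2) * r / (1 - ‖a‖ * r)) := by
  have hterm : (fun n => ‖mobiusCoeff a (n + 1)‖ * r ^ (n + 1))
      = fun n => (1 - ‖a‖ ^ 2) * r * (‖a‖ * r) ^ n := by
    funext n
    rw [norm_mobiusCoeff_succ ha]
    ring
  have htail := (hasSum_geometric_of_lt_one (by positivity) har).mul_left ((1 - ‖a‖ ^ 2) * r)
  rw [← hterm, ← div_eq_mul_inv] at htail
  simpa only [mobiusCoeff_zero, pow_zero, mul_one] using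
    HasSum.zero_add (f := fun n => ‖mobiusCoeff a n‖ * r ^ n) htail

end Complex

theorem one_lt_add_mul_div_of_one_lt_mul {s r : ℝ} (hs : s < 1) (hsr : s * r < 1)
    (h : 1 < r * (1 + 2 * s)) : 1 < s + (1 - s ^ 2) * r / (1 - s * r) := by
  rw [← sub_lt_iff_lt_add', lt_div_iff₀ (by linarith)]
  nlinarith

/-- **Sharpness of the Bohr radius `1/3`.** For every real `r` with `1/3 < r < 1` there
exists a holomorphic function `f` on the unit disc, bounded by `1`, whose Taylor
coefficients `aₙ` at `0` satisfy `Σ ‖aₙ‖ rⁿ > 1`. -/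
theorem bohr_radius_sharp (r : ℝ) (hr1 : 1 / 3 < r) (hr2 : r < 1) :
    ∃ f : ℂ → ℂ, ∃ a : ℕ → ℂ,
      DifferentiableOn ℂ f (ball (0 : ℂ) 1) ∧
      (∀ z ∈ ball (0 : ℂ) 1, ‖f z‖ ≤ 1) ∧
      (∀ z ∈ ball (0 : ℂ) 1, HasSum (fun n : ℕ => a n * z ^ n) (f z)) ∧
      1 < ∑' n : ℕ, ‖a n‖ * r ^ n := by
  have hr0 : 0 < r := by linarith
  obtain ⟨s, hs, hs1⟩ : ∃ s, (1 - r) / (2 * r) < s ∧ s < 1 :=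
    exists_between ((div_lt_one (by positivity)).2 (by linarith))
  have hs0 : 0 ≤ s := (div_nonneg (by linarith) (by positivity)).trans hs.le
  have hrs : 1 < r * (1 + 2 * s) := by
    rw [div_lt_iff₀ (by positivity)] at hs
    linarith
  have hsr : s * r < 1 := by nlinarith
  have hnorm : ‖(s : ℂ)‖ = s := by rw [Complex.norm_real, Real.norm_of_nonneg hs0]
  have hle : ‖(s : ℂ)‖ ≤ 1 := by rw [hnorm]; exact hs1.le
  refine ⟨Complex.mobius s, Complex.mobiusCoeff s, Complex.differentiableOn_mobius hle,
    fun z hz => Complex.norm_mobius_le_one hle (mem_ball_zero_iff.1 hz),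
    fun z hz => Complex.hasSum_mobiusCoeff_mul_pow hle (mem_ball_zero_iff.1 hz), ?_⟩
  rw [(Complex.hasSum_norm_mobiusCoeff_mul_pow hle hr0.le (by rwa [hnorm])).tsum_eq, hnorm]
  exact one_lt_add_mul_div_of_one_lt_mul hs1 hsr hrs
end

section
/- If f ∈ 𝓑 with Taylor coefficients a_n, then for every real r with 0 ≤ r ≤ 1/3 one has Σ_{n=0}^∞ |a_n| r^n + (16/9)·S_r(f)/(π − S_r(f)) ≤ 1. -/
/-!
Write `A = ‖a 0‖` and `c = 1 - A ^ 2`. Wiener's inequality `‖aₙ‖ ≤ c` for `n ≥ 1` (Schwarz–Pick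
applied to the average of `f` over the rotations of the disc by the `n`-th roots of unity) bounds
the area term: `S_r / π ≤ c² r² / (1 - r²)² ≤ 9 c² / 64`.

For the Bohr sum, compose `f` with the disc automorphism sending `a 0` to `0`; by Schwarz the
result is `ω = z g` with `‖g‖ ≤ 1`, and inverting the automorphism gives
`f - a 0 = c Σₖ (-conj (a 0))ᵏ ω ^ (k + 1)`. The classical Bohr inequality for each `g ^ (k + 1)`
bounds the majorant series of `ω ^ (k + 1)` by `r ^ (k + 1)`, whence
`Σ_{n ≥ 1} ‖aₙ‖ rⁿ ≤ c r / (1 - A r) ≤ c / (3 - A)`.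

It remains to check `A + c / (3 - A) + 16 c² / (64 - 9 c²) ≤ 1`; the deficit is
`(1 - A)³ (62 - 18 A + 2 A² + 18 A³) / ((3 - A) (64 - 9 c²))`.
-/

open Metric

/-- `S_r(f) = π Σ_{n≥1} n |aₙ|² r^{2n}`, written in terms of the Taylor coefficients
`a : ℕ → ℂ` of `f` (the `n = 0` term vanishes, so we may sum over all of `ℕ`). -/
noncomputable def Sarea (a : ℕ → ℂ) (r : ℝ) : ℝ :=
  Real.pi * ∑' n : ℕ, (n : ℝ) * ‖a n‖ ^ 2 * r ^ (2 * n)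

open Set ComplexConjugate
open scoped Nat

lemma le_of_forall_mem_Ioo_zero_one {p q : ℝ → ℝ} (hp : Continuous p) (hq : Continuous q)
    (h : ∀ t ∈ Ioo (0 : ℝ) 1, p t ≤ q t) : p 1 ≤ q 1 :=
  (isClosed_le hp hq).closure_subset_iff.2 h
    (by rw [closure_Ioo zero_ne_one]; exact right_mem_Icc.2 zero_le_one)

lemma summable_norm_mul_pow_of_bounded {a : ℕ → ℂ} {C r : ℝ} (ha : ∀ n, ‖a n‖ ≤ C)
    (hr0 : 0 ≤ r) (hr1 : r < 1) : Summable fun n => ‖a n‖ * r ^ n :=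
  .of_nonneg_of_le (fun n => by positivity)
    (fun n => mul_le_mul_of_nonneg_right (ha n) (by positivity))
    ((summable_geometric_of_lt_one hr0 hr1).mul_left C)

lemma tsum_norm_mul_pow_le_of_hasSum {α : ℕ → ℂ} {β : ℕ → ℕ → ℂ} {M : ℕ → ℝ} {r : ℝ}
    (hr : 0 ≤ r) (hα : ∀ m, HasSum (fun k => β k m) (α m))
    (hβ : ∀ k, Summable fun m => ‖β k m‖ * r ^ m)
    (hβM : ∀ k, ∑' m, ‖β k m‖ * r ^ m ≤ M k) (hM : Summable M) :
    ∑' m, ‖α m‖ * r ^ m ≤ ∑' k, M k := by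
  set x : ℕ → ℕ → ℝ := fun k m => ‖β k m‖ * r ^ m
  have hrow : Summable fun k => ∑' m, x k m :=
    hM.of_nonneg_of_le (fun _ => tsum_nonneg fun _ => by positivity) hβM
  have hx : Summable (Function.uncurry x) :=
    (summable_prod_of_nonneg fun _ => by
      simp only [Pi.zero_apply, Function.uncurry, x]; positivity).2 ⟨hβ, hrow⟩
  have hcol : ∀ m, Summable fun k => x k m := fun m =>
    hM.of_nonneg_of_le (fun _ => by positivity)
      fun k => ((hβ k).le_tsum m fun _ _ => by positivity).trans (hβM k)
  have hle : ∀ m, ‖α m‖ * r ^ m ≤ ∑' k, x k m := fun m => by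
    simpa [x, norm_mul, abs_of_nonneg hr] using
      ((hα m).mul_right ((r : ℂ) ^ m)).norm_le_of_bounded (hcol m).hasSum
        fun k => by simp [x, abs_of_nonneg hr]
  have hsum : Summable fun m => ∑' k, x k m := hx.prod_symm.prod
  calc ∑' m, ‖α m‖ * r ^ m ≤ ∑' m, ∑' k, x k m :=
        (hsum.of_nonneg_of_le (fun _ => by positivity) hle).tsum_le_tsum hle hsum
    _ = ∑' k, ∑' m, x k m := hx.tsum_comm' hβ hcol
    _ ≤ ∑' k, M k := hrow.tsum_le_tsum hβM hM

lemma tsum_norm_ite_mul_pow (b : ℕ → ℂ) (j : ℕ) (r : ℝ) :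
    ∑' m, ‖if j ≤ m then b (m - j) else 0‖ * r ^ m = r ^ j * ∑' m, ‖b m‖ * r ^ m := by
  rw [← (add_left_injective j).tsum_eq, ← tsum_mul_left]
  · congr 1 with m
    simp [pow_add]
    ring
  · intro m hm
    by_cases h : j ≤ m
    · exact ⟨m - j, Nat.sub_add_cancel h⟩
    · simp [h] at hm

lemma tsum_nat_mul_norm_sq_mul_pow_le {a : ℕ → ℂ} {C r : ℝ} (ha : ∀ n, n ≠ 0 → ‖a n‖ ≤ C)
    (hr0 : 0 ≤ r) (hr1 : r < 1) :
    ∑' n : ℕ, (n : ℝ) * ‖a n‖ ^ 2 * r ^ (2 * n) ≤ C ^ 2 * (r ^ 2 / (1 - r ^ 2) ^ 2) := by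
  have hterm : ∀ n : ℕ, (n : ℝ) * ‖a n‖ ^ 2 * r ^ (2 * n) ≤ C ^ 2 * (n * (r ^ 2) ^ n) :=
    fun n => by
    rcases eq_or_ne n 0 with rfl | hn
    · simp
    · rw [pow_mul, mul_left_comm, mul_assoc]
      gcongr
      exact ha n hn
  have hR := (hasSum_coe_mul_geometric_of_norm_lt_one (𝕜 := ℝ) (r := r ^ 2)
    (by rw [Real.norm_of_nonneg (by positivity)]; nlinarith)).mul_left (C ^ 2)
  exact hasSum_le hterm (hR.summable.of_nonneg_of_le (fun n => by positivity) hterm).hasSum hR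

lemma IsPrimitiveRoot.sum_pow_pow_eq_ite {ζ : ℂ} {n : ℕ} (hζ : IsPrimitiveRoot ζ n)
    (t : ℕ) : ∑ j ∈ Finset.range n, (ζ ^ j) ^ t = if n ∣ t then (n : ℂ) else 0 := by
  simp_rw [← pow_mul, mul_comm _ t, pow_mul]
  split_ifs with h
  · simp [(hζ.pow_eq_one_iff_dvd t).2 h]
  · rw [geom_sum_eq (mt (hζ.pow_eq_one_iff_dvd t).1 h), ← pow_mul, mul_comm, pow_mul,
      hζ.pow_eq_one, one_pow, sub_self, zero_div]

namespace Bohr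

def HasCoeffs (f : ℂ → ℂ) (a : ℕ → ℂ) : Prop :=
  ∀ z ∈ ball (0 : ℂ) 1, HasSum (fun n => a n * z ^ n) (f z)

namespace HasCoeffs

variable {f g : ℂ → ℂ} {a b : ℕ → ℂ}

lemma apply_zero (hf : HasCoeffs f a) : f 0 = a 0 :=
  (hf 0 (mem_ball_self one_pos)).unique <| by
    simpa using hasSum_single (f := fun n => a n * (0 : ℂ) ^ n) 0 (by simp +contextual)

lemma one_le_radius (hf : HasCoeffs f a) :
    1 ≤ (FormalMultilinearSeries.ofScalars ℂ a).radius := by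
  refine ENNReal.le_of_forall_nnreal_lt fun ρ hρ => ?_
  have hρ1 : (ρ : ℂ) ∈ ball (0 : ℂ) 1 := by simpa using hρ
  refine FormalMultilinearSeries.le_radius_of_tendsto _ (l := 0) ?_
  simpa using (hf _ hρ1).summable.tendsto_atTop_zero.norm

lemma hasFPowerSeriesOnBall (hf : HasCoeffs f a) :
    HasFPowerSeriesOnBall f (FormalMultilinearSeries.ofScalars ℂ a) 0 1 where
  r_le := hf.one_le_radius
  r_pos := one_pos
  hasSum {y} hy := by
    rw [← ENNReal.coe_one, eball_coe, NNReal.coe_one] at hy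
    simpa [FormalMultilinearSeries.ofScalars_apply_eq, mul_comm] using hf y hy

lemma differentiableOn (hf : HasCoeffs f a) : DifferentiableOn ℂ f (ball 0 1) := by
  simpa [← ENNReal.coe_one, eball_coe] using hf.hasFPowerSeriesOnBall.differentiableOn

lemma coeff_eq (hf : HasCoeffs f a) (n : ℕ) : a n = (n ! : ℂ)⁻¹ * iteratedDeriv n f 0 := by
  rw [iteratedDeriv_eq_iteratedFDeriv, ← hf.hasFPowerSeriesOnBall.factorial_smul,
    FormalMultilinearSeries.ofScalars_apply_eq, nsmul_eq_mul, one_pow, smul_eq_mul, mul_one,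
    inv_mul_cancel_left₀ (by exact_mod_cast n.factorial_ne_zero)]

lemma norm_coeff_le {C : ℝ} (hf : HasCoeffs f a) (hC : ∀ z ∈ ball (0 : ℂ) 1, ‖f z‖ ≤ C)
    (n : ℕ) : ‖a n‖ ≤ C := by
  have hρ : ∀ ρ ∈ Ioo (0 : ℝ) 1, ‖a n‖ * ρ ^ n ≤ C := fun ρ ⟨hρ0, hρ1⟩ => by
    have hcauchy := Complex.norm_iteratedDeriv_le_of_forall_mem_sphere_norm_le n hρ0
      (hf.differentiableOn.diffContOnCl_ball (closedBall_subset_ball hρ1))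
      (fun z hz => hC z (sphere_subset_ball hρ1 hz))
    rw [hf.coeff_eq, norm_mul, norm_inv, Complex.norm_natCast, mul_assoc,
      inv_mul_le_iff₀ (by positivity)]
    rwa [le_div_iff₀ (by positivity)] at hcauchy
  simpa using le_of_forall_mem_Ioo_zero_one (by fun_prop) continuous_const hρ

lemma sub (hf : HasCoeffs f a) (hg : HasCoeffs g b) :
    HasCoeffs (fun z => f z - g z) (fun n => a n - b n) := fun z hz => by
  simpa [sub_mul] using (hf z hz).sub (hg z hz)

lemma const_mul (hf : HasCoeffs f a) (c : ℂ) :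
    HasCoeffs (fun z => c * f z) (fun n => c * a n) := fun z hz => by
  simpa [mul_assoc] using (hf z hz).mul_left c

lemma monomial_mul (hf : HasCoeffs f a) (j : ℕ) :
    HasCoeffs (fun z => z ^ j * f z) (fun n => if j ≤ n then a (n - j) else 0) := fun z hz => by
  refine (add_left_injective j).hasSum_iff ?_ |>.1 ?_
  · rintro n hn
    simp only [if_neg fun h : j ≤ n => hn ⟨n - j, Nat.sub_add_cancel h⟩, zero_mul]
  · simpa [Function.comp_def, pow_add, mul_comm, mul_left_comm] using (hf z hz).mul_left (z ^ j)

end HasCoeffs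

lemma hasCoeffs_const (c : ℂ) : HasCoeffs (fun _ => c) (Pi.single 0 c) := fun z _ => by
  simpa using hasSum_single (f := fun n => (Pi.single 0 c : ℕ → ℂ) n * z ^ n) 0
    (fun n hn => by simp [hn])

lemma hasCoeffs_sum {ι : Type*} (s : Finset ι) {F : ι → ℂ → ℂ} {β : ι → ℕ → ℂ}
    (h : ∀ k ∈ s, HasCoeffs (F k) (β k)) :
    HasCoeffs (fun z => ∑ k ∈ s, F k z) (fun n => ∑ k ∈ s, β k n) := fun z hz => by
  simpa [Finset.sum_mul] using hasSum_sum fun k hk => h k hk z hz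

lemma hasCoeffs_tsum {a : ℕ → ℂ} {C : ℝ} (ha : ∀ n, ‖a n‖ ≤ C) :
    HasCoeffs (fun z => ∑' n, a n * z ^ n) a := fun z hz => by
  refine (Summable.of_norm_bounded ((summable_geometric_of_lt_one (norm_nonneg z)
    (mem_ball_zero_iff.1 hz)).mul_left C) fun n => ?_).hasSum
  rw [norm_mul, norm_pow]
  exact mul_le_mul_of_nonneg_right (ha n) (by positivity)

lemma hasCoeffs_taylor {f : ℂ → ℂ} (hf : DifferentiableOn ℂ f (ball 0 1)) :
    HasCoeffs f fun n => (n ! : ℂ)⁻¹ * iteratedDeriv n f 0 := fun z hz => by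
  simpa [mul_comm, mul_assoc, mul_left_comm] using Complex.hasSum_taylorSeries_on_ball hf hz

/-- The remainder after `K` terms is bounded by `∑' k, M (k + K)` on the disc, hence (Cauchy)
so are its coefficients. -/
lemma HasCoeffs.hasSum_coeff_of_hasSum {F : ℕ → ℂ → ℂ} {β : ℕ → ℕ → ℂ} {G : ℂ → ℂ}
    {α : ℕ → ℂ} {M : ℕ → ℝ} (hF : ∀ k, HasCoeffs (F k) (β k)) (hG : HasCoeffs G α)
    (hsum : ∀ z ∈ ball (0 : ℂ) 1, HasSum (fun k => F k z) (G z))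
    (hM : ∀ k, ∀ z ∈ ball (0 : ℂ) 1, ‖F k z‖ ≤ M k) (hMs : Summable M) (m : ℕ) :
    HasSum (fun k => β k m) (α m) := by
  have hrem : ∀ K, ‖α m - ∑ k ∈ Finset.range K, β k m‖ ≤ ∑' k, M (k + K) := fun K =>
    (hG.sub (hasCoeffs_sum _ fun k _ => hF k)).norm_coeff_le (fun z hz =>
      ((hasSum_nat_add_iff' K).2 (hsum z hz)).norm_le_of_bounded
        ((summable_nat_add_iff K).2 hMs).hasSum fun k => hM _ z hz) m
  refine (Summable.of_norm_bounded hMs fun k => (hF k).norm_coeff_le (hM k) m)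
    |>.hasSum_iff_tendsto_nat.2 ?_
  rw [tendsto_iff_norm_sub_tendsto_zero]
  exact squeeze_zero (fun _ => norm_nonneg _) (fun K => norm_sub_rev (α m) _ ▸ hrem K)
    (tendsto_sum_nat_add M)

noncomputable def mobius (c w : ℂ) : ℂ := (w - c) / (1 - conj c * w)

section mobius

variable {c w : ℂ}

lemma one_sub_conj_mul_ne_zero (hc : ‖c‖ < 1) (hw : ‖w‖ ≤ 1) : 1 - conj c * w ≠ 0 := by
  refine sub_ne_zero.2 fun h => ?_
  have : ‖conj c * w‖ < 1 := by
    rw [norm_mul, RCLike.norm_conj]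
    exact mul_lt_one_of_nonneg_of_lt_one_left (norm_nonneg c) hc hw
  rw [← h, norm_one] at this
  exact lt_irrefl _ this

lemma norm_one_sub_conj_mul_sq_sub_norm_sub_sq (c w : ℂ) :
    ‖1 - conj c * w‖ ^ 2 - ‖w - c‖ ^ 2 = (1 - ‖c‖ ^ 2) * (1 - ‖w‖ ^ 2) := by
  simp only [Complex.sq_norm, Complex.normSq_apply, Complex.sub_re, Complex.sub_im,
    Complex.mul_re, Complex.mul_im, Complex.one_re, Complex.one_im, Complex.conj_re,
    Complex.conj_im]
  ring

lemma norm_mobius_le_one (hc : ‖c‖ < 1) (hw : ‖w‖ ≤ 1) : ‖mobius c w‖ ≤ 1 := by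
  rw [mobius, norm_div, div_le_one (norm_pos_iff.2 (one_sub_conj_mul_ne_zero hc hw))]
  have := norm_one_sub_conj_mul_sq_sub_norm_sub_sq c w
  have : 0 ≤ (1 - ‖c‖ ^ 2) * (1 - ‖w‖ ^ 2) := by
    apply mul_nonneg <;> nlinarith [norm_nonneg c, norm_nonneg w]
  nlinarith [norm_nonneg (w - c), norm_nonneg (1 - conj c * w)]

lemma differentiableOn_mobius_comp {f : ℂ → ℂ} {s : Set ℂ} (hf : DifferentiableOn ℂ f s)
    (hb : ∀ z ∈ s, ‖f z‖ ≤ 1) (hc : ‖c‖ < 1) :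
    DifferentiableOn ℂ (fun z => mobius c (f z)) s :=
  (hf.sub_const c).div ((differentiableOn_const 1).sub (hf.const_mul _))
    fun z hz => one_sub_conj_mul_ne_zero hc (hb z hz)

@[simp] lemma mobius_self (c : ℂ) : mobius c c = 0 := by simp [mobius]

lemma hasDerivAt_mobius (hc : ‖c‖ < 1) : HasDerivAt (mobius c) (1 - (‖c‖ : ℂ) ^ 2)⁻¹ c := by
  have hD := one_sub_conj_mul_ne_zero hc hc.le
  have hN : HasDerivAt (fun w => w - c) 1 c := (hasDerivAt_id c).sub_const c
  have hD' : HasDerivAt (fun w => 1 - conj c * w) (-conj c) c := by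
    simpa using ((hasDerivAt_id c).const_mul (conj c)).const_sub 1
  refine (hN.div hD' hD).congr_deriv ?_
  rw [Complex.conj_mul'] at hD ⊢
  field_simp
  ring

lemma hasSum_mobius_inv (hc : ‖c‖ < 1) (hw : ‖w‖ ≤ 1) :
    HasSum (fun k => (1 - (‖c‖ : ℂ) ^ 2) * (-conj c) ^ k * mobius c w ^ (k + 1)) (w - c) := by
  have hc2 : 1 - conj c * c ≠ 0 := one_sub_conj_mul_ne_zero hc hc.le
  have hq : ‖-conj c * mobius c w‖ < 1 := by
    rw [norm_mul, norm_neg, RCLike.norm_conj]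
    exact mul_lt_one_of_nonneg_of_lt_one_left (norm_nonneg c) hc (norm_mobius_le_one hc hw)
  have hden : 1 - -conj c * mobius c w = (1 - conj c * c) / (1 - conj c * w) := by
    rw [mobius]
    field_simp [one_sub_conj_mul_ne_zero hc hw]
    ring
  have hval : (1 - (‖c‖ : ℂ) ^ 2) * mobius c w * (1 - -conj c * mobius c w)⁻¹ = w - c := by
    rw [hden, mobius, ← Complex.conj_mul']
    field_simp [one_sub_conj_mul_ne_zero hc hw]
  rw [← hval]
  exact ((hasSum_geometric_of_norm_lt_one hq).mul_left _).congr_fun fun k => by ring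

end mobius

namespace HasCoeffs

variable {f : ℂ → ℂ} {a : ℕ → ℂ}

lemma deriv_zero (hf : HasCoeffs f a) : deriv f 0 = a 1 := by
  simpa using (hf.coeff_eq 1).symm

lemma norm_coeff_one_le_of_norm_lt_one (hf : HasCoeffs f a)
    (hb : ∀ z ∈ ball (0 : ℂ) 1, ‖f z‖ ≤ 1) (h0 : ‖a 0‖ < 1) : ‖a 1‖ ≤ 1 - ‖a 0‖ ^ 2 := by
  set c := a 0
  have hd := hf.differentiableOn
  have hφd := differentiableOn_mobius_comp hd hb h0
  have hmaps : MapsTo (fun z => mobius c (f z)) (ball 0 1) (closedBall (mobius c (f 0)) 1) :=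
    fun z hz => by
      rw [hf.apply_zero, mobius_self, mem_closedBall_zero_iff]
      exact norm_mobius_le_one h0 (hb z hz)
  have hderiv : HasDerivAt (fun z => mobius c (f z)) ((1 - (‖c‖ : ℂ) ^ 2)⁻¹ * a 1) 0 := by
    rw [← hf.deriv_zero]
    refine HasDerivAt.comp (h₂ := mobius c) 0 ?_
      (hd.differentiableAt (ball_mem_nhds 0 one_pos)).hasDerivAt
    rw [hf.apply_zero]
    exact hasDerivAt_mobius h0
  have hschwarz := hderiv.deriv ▸ Complex.norm_deriv_le_one_of_mapsTo_ball hφd hmaps one_pos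
  have hc : (0 : ℝ) < 1 - ‖c‖ ^ 2 := by nlinarith [norm_nonneg c]
  rwa [norm_mul, norm_inv, show (1 - (‖c‖ : ℂ) ^ 2) = ((1 - ‖c‖ ^ 2 : ℝ) : ℂ) by push_cast; ring,
    Complex.norm_real, Real.norm_of_nonneg hc.le, inv_mul_le_iff₀ hc, mul_one] at hschwarz

lemma norm_coeff_one_le (hf : HasCoeffs f a) (hb : ∀ z ∈ ball (0 : ℂ) 1, ‖f z‖ ≤ 1) :
    ‖a 1‖ ≤ 1 - ‖a 0‖ ^ 2 := by
  -- `t * f` satisfies `‖t * a 0‖ < 1` for `t < 1`; then let `t → 1`.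
  have ha0 : ‖a 0‖ ≤ 1 := hf.norm_coeff_le hb 0
  have key : ∀ t ∈ Ioo (0 : ℝ) 1, t * ‖a 1‖ ≤ 1 - t ^ 2 * ‖a 0‖ ^ 2 := fun t ⟨ht0, ht1⟩ => by
    have hbt : ∀ z ∈ ball (0 : ℂ) 1, ‖(t : ℂ) * f z‖ ≤ 1 := fun z hz => by
      rw [norm_mul, Complex.norm_real, Real.norm_of_nonneg ht0.le]
      nlinarith [hb z hz, norm_nonneg (f z)]
    have ht0' : ‖(t : ℂ) * a 0‖ < 1 := by
      rw [norm_mul, Complex.norm_real, Real.norm_of_nonneg ht0.le]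
      nlinarith [norm_nonneg (a 0)]
    simpa [norm_mul, abs_of_pos ht0, mul_pow] using
      (hf.const_mul t).norm_coeff_one_le_of_norm_lt_one hbt ht0'
  simpa using le_of_forall_mem_Ioo_zero_one (by fun_prop) (by fun_prop) key

lemma hasSum_mul_index_eq_average (hf : HasCoeffs f a) {ζ : ℂ} {n : ℕ} (hζ : IsPrimitiveRoot ζ n)
    (hn : n ≠ 0) {z : ℂ} (hz : z ∈ ball (0 : ℂ) 1) :
    HasSum (fun k => a (n * k) * z ^ (n * k))
      ((n : ℂ)⁻¹ * ∑ j ∈ Finset.range n, f (ζ ^ j * z)) := by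
  have hrot : ∀ j, ζ ^ j * z ∈ ball (0 : ℂ) 1 := fun j => by
    simpa [norm_pow, hζ.norm'_eq_one hn] using hz
  have hsum := hasSum_sum fun j (_ : j ∈ Finset.range n) => hf _ (hrot j)
  simp_rw [mul_pow, mul_left_comm (a _), ← Finset.sum_mul, hζ.sum_pow_pow_eq_ite] at hsum
  have hmul := ((mul_right_injective₀ hn).hasSum_iff fun t ht => ?_).2 hsum
  · simpa [Function.comp_def, ← mul_assoc, hn] using hmul.mul_left (n : ℂ)⁻¹
  · rw [if_neg fun ⟨k, hk⟩ => ht ⟨k, hk.symm⟩, zero_mul]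

lemma norm_coeff_le_one_sub_sq (hf : HasCoeffs f a) (hb : ∀ z ∈ ball (0 : ℂ) 1, ‖f z‖ ≤ 1)
    {n : ℕ} (hn : n ≠ 0) : ‖a n‖ ≤ 1 - ‖a 0‖ ^ 2 := by
  have hζ := Complex.isPrimitiveRoot_exp n hn
  have hh := hasCoeffs_tsum (a := fun k => a (n * k)) fun k => hf.norm_coeff_le hb (n * k)
  have hbound : ∀ w ∈ ball (0 : ℂ) 1, ‖∑' k, a (n * k) * w ^ k‖ ≤ 1 := by
    intro w hw
    obtain ⟨z, rfl⟩ := IsAlgClosed.exists_pow_nat_eq w (Nat.pos_of_ne_zero hn)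
    have hz : z ∈ ball (0 : ℂ) 1 := by
      rw [mem_ball_zero_iff, norm_pow] at hw
      exact mem_ball_zero_iff.2 ((pow_lt_one_iff_of_nonneg (norm_nonneg z) hn).1 hw)
    rw [(hh _ hw).tsum_eq, (hh _ hw).unique (by
      simpa only [pow_mul] using hf.hasSum_mul_index_eq_average hζ hn hz), norm_mul, norm_inv,
      Complex.norm_natCast, inv_mul_le_one₀ (by positivity)]
    refine (norm_sum_le _ _).trans ?_
    simpa using Finset.sum_le_sum fun j (_ : j ∈ Finset.range n) => hb _ (by
      simpa [norm_pow, hζ.norm'_eq_one hn] using hz)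
  simpa using hh.norm_coeff_one_le hbound

lemma tsum_norm_mul_pow_le_one (hf : HasCoeffs f a) (hb : ∀ z ∈ ball (0 : ℂ) 1, ‖f z‖ ≤ 1)
    {r : ℝ} (hr0 : 0 ≤ r) (hr : r ≤ 1 / 3) : ∑' n, ‖a n‖ * r ^ n ≤ 1 := by
  have hr1 : r < 1 := by linarith
  set A := ‖a 0‖
  have hA : A ≤ 1 := hf.norm_coeff_le hb 0
  have hs := summable_norm_mul_pow_of_bounded (hf.norm_coeff_le hb) hr0 hr1
  have htail : ∑' n, ‖a (n + 1)‖ * r ^ (n + 1) ≤ (1 - A ^ 2) * r * (1 - r)⁻¹ :=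
    hasSum_le (fun n => by
        rw [pow_succ, mul_comm (r ^ n) r, ← mul_assoc]
        gcongr
        exact hf.norm_coeff_le_one_sub_sq hb n.succ_ne_zero)
      ((summable_nat_add_iff 1).2 hs).hasSum
      ((hasSum_geometric_of_lt_one hr0 hr1).mul_left _)
  have hr2 : r * (1 - r)⁻¹ ≤ 1 / 2 := by
    rw [← div_eq_mul_inv, div_le_iff₀ (by linarith)]; linarith
  have hA2 : 0 ≤ 1 - A ^ 2 := by nlinarith [norm_nonneg (a 0)]
  have := mul_le_mul_of_nonneg_left hr2 hA2
  rw [hs.tsum_eq_zero_add, pow_zero, mul_one]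
  nlinarith [sq_nonneg (1 - A)]

end HasCoeffs

lemma exists_hasCoeffs_mul_pow_tsum_le {g : ℂ → ℂ} (hg : DifferentiableOn ℂ g (ball 0 1))
    (hgb : ∀ z ∈ ball (0 : ℂ) 1, ‖g z‖ ≤ 1) (j : ℕ) {r : ℝ} (hr0 : 0 ≤ r) (hr : r ≤ 1 / 3) :
    ∃ β : ℕ → ℂ, HasCoeffs (fun z => (z * g z) ^ j) β ∧ ∑' m, ‖β m‖ * r ^ m ≤ r ^ j := by
  obtain ⟨b, hb⟩ : ∃ b, HasCoeffs (g ^ j) b := ⟨_, hasCoeffs_taylor (hg.pow j)⟩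
  refine ⟨_, by simpa [mul_pow] using hb.monomial_mul j, ?_⟩
  rw [tsum_norm_ite_mul_pow]
  refine mul_le_of_le_one_right (pow_nonneg hr0 j)
    (hb.tsum_norm_mul_pow_le_one (fun z hz => ?_) hr0 hr)
  rw [Pi.pow_apply, norm_pow]
  exact pow_le_one₀ (norm_nonneg _) (hgb z hz)

/-- Writing `ω = z · g` (Schwarz), the `k`-th term has majorant `‖d k‖ r ^ (k + 1)` by Bohr's
inequality for `g ^ (k + 1)`; the coefficients of the sum are the sums of the coefficients. -/
lemma HasCoeffs.tsum_norm_mul_pow_le_of_hasSum_pow {G ω : ℂ → ℂ} {α d : ℕ → ℂ}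
    (hG : HasCoeffs G α) (hω : DifferentiableOn ℂ ω (ball 0 1))
    (hωb : ∀ z ∈ ball (0 : ℂ) 1, ‖ω z‖ ≤ 1) (hω0 : ω 0 = 0) (hd : Summable fun k => ‖d k‖)
    (hsum : ∀ z ∈ ball (0 : ℂ) 1, HasSum (fun k => d k * ω z ^ (k + 1)) (G z))
    {r : ℝ} (hr0 : 0 ≤ r) (hr : r ≤ 1 / 3) :
    ∑' m, ‖α m‖ * r ^ m ≤ ∑' k, ‖d k‖ * r ^ (k + 1) := by
  have hr1 : r < 1 := by linarith
  set g := dslope ω 0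
  have hωg : ∀ z, ω z = z * g z := fun z => by
    simpa [hω0] using (sub_smul_dslope ω 0 z).symm
  have hg : DifferentiableOn ℂ g (ball 0 1) :=
    (Complex.differentiableOn_dslope (ball_mem_nhds 0 one_pos)).2 hω
  have hgb : ∀ z ∈ ball (0 : ℂ) 1, ‖g z‖ ≤ 1 := fun z hz => by
    simpa using Complex.norm_dslope_le_div_of_mapsTo_ball hω
      (fun w hw => by simpa [hω0] using hωb w hw) hz
  choose β hβ hβr using fun k => exists_hasCoeffs_mul_pow_tsum_le hg hgb (k + 1) hr0 hr
  have hF : ∀ k, HasCoeffs (fun z => d k * ω z ^ (k + 1)) (fun m => d k * β k m) := fun k => by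
    simpa only [hωg] using (hβ k).const_mul (d k)
  have hM : ∀ k, ∀ z ∈ ball (0 : ℂ) 1, ‖d k * ω z ^ (k + 1)‖ ≤ ‖d k‖ := fun k z hz => by
    rw [norm_mul, norm_pow]
    exact mul_le_of_le_one_right (norm_nonneg _) (pow_le_one₀ (norm_nonneg _) (hωb z hz))
  refine tsum_norm_mul_pow_le_of_hasSum hr0 (hG.hasSum_coeff_of_hasSum hF hsum hM hd)
    (fun k => summable_norm_mul_pow_of_bounded ((hF k).norm_coeff_le (hM k)) hr0 hr1)
    (fun k => ?_) (hd.of_nonneg_of_le (fun k => by positivity)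
      fun k => mul_le_of_le_one_right (norm_nonneg _) (pow_le_one₀ hr0 hr1.le))
  simp_rw [norm_mul, mul_assoc, tsum_mul_left]
  exact mul_le_mul_of_nonneg_left (hβr k) (norm_nonneg _)

lemma HasCoeffs.tsum_norm_mul_pow_succ_le {f : ℂ → ℂ} {a : ℕ → ℂ} (hf : HasCoeffs f a)
    (hb : ∀ z ∈ ball (0 : ℂ) 1, ‖f z‖ ≤ 1) {r : ℝ} (hr0 : 0 ≤ r) (hr : r ≤ 1 / 3) :
    ∑' n, ‖a (n + 1)‖ * r ^ (n + 1) ≤ (1 - ‖a 0‖ ^ 2) * r / (1 - ‖a 0‖ * r) := by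
  set c := a 0
  rcases (hf.norm_coeff_le hb 0).lt_or_eq with hc | hc
  swap
  · have : ∀ n, a (n + 1) = 0 := fun n => norm_le_zero_iff.1 <| by
      simpa [c, hc] using hf.norm_coeff_le_one_sub_sq hb n.succ_ne_zero
    simp [this, c, hc]
  have hcr : ‖c‖ * r < 1 := by nlinarith [norm_nonneg c]
  have hterm : ∀ k, ‖(1 - (‖c‖ : ℂ) ^ 2) * (-conj c) ^ k‖ = (1 - ‖c‖ ^ 2) * ‖c‖ ^ k :=
    fun k => by
    rw [norm_mul, norm_pow, norm_neg, RCLike.norm_conj, ← Complex.ofReal_pow,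
      ← Complex.ofReal_one, ← Complex.ofReal_sub, Complex.norm_real,
      Real.norm_of_nonneg (by nlinarith [norm_nonneg c])]
  have key := (hf.sub (hasCoeffs_const c)).tsum_norm_mul_pow_le_of_hasSum_pow
    (d := fun k => (1 - (‖c‖ : ℂ) ^ 2) * (-conj c) ^ k)
    (differentiableOn_mobius_comp hf.differentiableOn hb hc)
    (fun z hz => norm_mobius_le_one hc (hb z hz))
    (by simp [hf.apply_zero]) (by
      simp_rw [hterm]; exact (summable_geometric_of_lt_one (norm_nonneg c) hc).mul_left _)
    (fun z hz => hasSum_mobius_inv hc (hb z hz)) hr0 hr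
  have hlhs : ∑' n, ‖a (n + 1)‖ * r ^ (n + 1)
      = ∑' m, ‖a m - (Pi.single 0 c : ℕ → ℂ) m‖ * r ^ m := by
    refine Eq.trans ?_ ((add_left_injective 1).tsum_eq ?_)
    · simp
    · rintro (_ | m) hm
      · simp [c] at hm
      · exact ⟨m, rfl⟩
  have hrhs : ∑' k, (1 - ‖c‖ ^ 2) * ‖c‖ ^ k * r ^ (k + 1)
      = (1 - ‖c‖ ^ 2) * r / (1 - ‖c‖ * r) := by
    simp_rw [pow_succ, ← mul_assoc, mul_right_comm _ _ r, mul_assoc _ (‖c‖ ^ _), ← mul_pow]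
    rw [tsum_mul_left, tsum_geometric_of_lt_one (by positivity) hcr, div_eq_mul_inv]
  simp_rw [hterm] at key
  rw [hlhs, ← hrhs]
  exact key

lemma add_add_area_term_le_one {A r B T : ℝ} (hA0 : 0 ≤ A) (hA1 : A ≤ 1) (hr0 : 0 ≤ r)
    (hr : r ≤ 1 / 3) (hB : B ≤ (1 - A ^ 2) * r / (1 - A * r)) (hT0 : 0 ≤ T)
    (hT : T ≤ (1 - A ^ 2) ^ 2 * (r ^ 2 / (1 - r ^ 2) ^ 2)) :
    A + B + 16 / 9 * (T / (1 - T)) ≤ 1 := by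
  obtain ⟨c, hc⟩ : ∃ c, c = 1 - A ^ 2 := ⟨_, rfl⟩
  obtain ⟨d, hd⟩ : ∃ d, d = 64 - 9 * c ^ 2 := ⟨_, rfl⟩
  rw [← hc] at hB hT
  have hc0 : 0 ≤ c := by nlinarith
  have hd0 : 0 < d := by nlinarith
  have hB' : B ≤ c / (3 - A) := hB.trans <| by
    rw [div_le_div_iff₀ (by nlinarith) (by linarith)]
    nlinarith [mul_nonneg hc0 hr0]
  have hr2 : r ^ 2 / (1 - r ^ 2) ^ 2 ≤ 9 / 64 := by
    rw [div_le_div_iff₀ (by nlinarith) (by norm_num)]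
    nlinarith [mul_nonneg (show 0 ≤ 1 - 9 * r ^ 2 by nlinarith)
      (show 0 ≤ 9 - r ^ 2 by nlinarith)]
  have hT1 : 16 / 9 * (T / (1 - T)) ≤ 16 * c ^ 2 / d := by
    have : T ≤ 9 / 64 * c ^ 2 := by nlinarith [sq_nonneg c]
    rw [← mul_div_assoc, div_le_div_iff₀ (by nlinarith) hd0]
    nlinarith
  have key : 1 - (A + c / (3 - A) + 16 * c ^ 2 / d)
      = (1 - A) ^ 3 * (62 - 18 * A + 2 * A ^ 2 + 18 * A ^ 3) / ((3 - A) * d) := by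
    have h3 : 3 - A ≠ 0 := by linarith
    have hd' := hd0.ne'
    field_simp
    rw [hd, hc]
    ring
  have hpoly : 0 ≤ (1 - A) ^ 3 * (62 - 18 * A + 2 * A ^ 2 + 18 * A ^ 3) / ((3 - A) * d) :=
    div_nonneg (mul_nonneg (pow_nonneg (by linarith) 3) (by nlinarith))
      (mul_pos (by linarith) hd0).le
  linarith

end Bohr

theorem bohr_inequality_with_area_term_general (f : ℂ → ℂ)
    (hb : ∀ z ∈ ball (0 : ℂ) 1, ‖f z‖ ≤ 1)
    (a : ℕ → ℂ)
    (ha : ∀ z ∈ ball (0 : ℂ) 1, HasSum (fun n : ℕ => a n * z ^ n) (f z))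
    (r : ℝ) (hr0 : 0 ≤ r) (hr : r ≤ 1 / 3) :
    (∑' n : ℕ, ‖a n‖ * r ^ n) + 16 / 9 * (Sarea a r / (Real.pi - Sarea a r)) ≤ 1 := by
  have hf : Bohr.HasCoeffs f a := ha
  have hr1 : r < 1 := by linarith
  have hS : Sarea a r / (Real.pi - Sarea a r)
      = (∑' n : ℕ, (n : ℝ) * ‖a n‖ ^ 2 * r ^ (2 * n))
        / (1 - ∑' n : ℕ, (n : ℝ) * ‖a n‖ ^ 2 * r ^ (2 * n)) := by
    rw [Sarea, ← mul_one_sub, mul_div_mul_left _ _ Real.pi_ne_zero]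
  rw [(summable_norm_mul_pow_of_bounded (hf.norm_coeff_le hb) hr0 hr1).tsum_eq_zero_add, hS,
    pow_zero, mul_one]
  exact Bohr.add_add_area_term_le_one (norm_nonneg _) (hf.norm_coeff_le hb 0) hr0 hr
    (hf.tsum_norm_mul_pow_succ_le hb hr0 hr) (tsum_nonneg fun n => by positivity)
    (tsum_nat_mul_norm_sq_mul_pow_le (fun n hn => hf.norm_coeff_le_one_sub_sq hb hn) hr0 hr1)

/-- Kayumov–Ponnusamy: for `f` holomorphic and bounded by one on the unit disc with
Taylor coefficients `aₙ`, one has `Σ ‖aₙ‖ rⁿ + (16/9) · S_r/(π − S_r) ≤ 1` for all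
`0 ≤ r ≤ 1/3`. -/
theorem bohr_inequality_with_area_term (f : ℂ → ℂ)
    (hd : DifferentiableOn ℂ f (ball (0 : ℂ) 1))
    (hb : ∀ z ∈ ball (0 : ℂ) 1, ‖f z‖ ≤ 1)
    (a : ℕ → ℂ)
    (ha : ∀ z ∈ ball (0 : ℂ) 1, HasSum (fun n : ℕ => a n * z ^ n) (f z))
    (r : ℝ) (hr0 : 0 ≤ r) (hr : r ≤ 1 / 3) :
    (∑' n : ℕ, ‖a n‖ * r ^ n) + 16 / 9 * (Sarea a r / (Real.pi - Sarea a r)) ≤ 1 :=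
  bohr_inequality_with_area_term_general f hb a ha r hr0 hr
end

section
/- For each fixed 0 ≤ r ≤ 1/3, the function J_r(a) := 1 − a − r√(1−a²)/√(1−r²) is strictly decreasing on [0,r], and J(a,r) ≥ J(r,r) = 1 − 2r > 0 for all a ∈ [0,r]. -/
/-!
`a ↦ J(a,r)` decreases on `[0,r]` as soon as its slope `-1` beats the slope of
`a ↦ -r√(1-a²)/√(1-r²)`. Rationalising, `√(1-a²) - √(1-b²) = (b²-a²)/(√(1-a²) + √(1-b²))`
with denominator at least `2√(1-r²)` for `a, b ≤ r`, so that slope is at most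
`r(a+b)/(2(1-r²)) ≤ r²/(1-r²)`, which is `< 1` whenever `2r² < 1`.
At `a = r` the two square roots cancel, giving `J(r,r) = 1 - 2r`.
-/

/-- `J(a,r) = 1 − a − r√(1−a²)/√(1−r²)`. -/
noncomputable def J (a r : ℝ) : ℝ :=
  1 - a - r * Real.sqrt (1 - a ^ 2) / Real.sqrt (1 - r ^ 2)

open Real

lemma sqrt_one_sub_sq_sub_sqrt_one_sub_sq_le {a b r : ℝ} (ha : 0 ≤ a) (hab : a ≤ b)
    (hbr : b ≤ r) (hr : r ^ 2 < 1) :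
    √(1 - a ^ 2) - √(1 - b ^ 2) ≤ (b ^ 2 - a ^ 2) / (2 * √(1 - r ^ 2)) := by
  have hu : 0 < √(1 - r ^ 2) := sqrt_pos.2 (by linarith)
  have hs : √(1 - r ^ 2) ≤ √(1 - a ^ 2) := sqrt_le_sqrt (by nlinarith)
  have ht : √(1 - r ^ 2) ≤ √(1 - b ^ 2) := sqrt_le_sqrt (by nlinarith)
  have hst : √(1 - b ^ 2) ≤ √(1 - a ^ 2) := sqrt_le_sqrt (by nlinarith)
  have hdiff :
      (√(1 - a ^ 2) - √(1 - b ^ 2)) * (√(1 - a ^ 2) + √(1 - b ^ 2)) = b ^ 2 - a ^ 2 := by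
    linear_combination sq_sqrt (show 0 ≤ 1 - a ^ 2 by nlinarith) -
      sq_sqrt (show 0 ≤ 1 - b ^ 2 by nlinarith)
  rw [le_div_iff₀ (by positivity)]
  calc (√(1 - a ^ 2) - √(1 - b ^ 2)) * (2 * √(1 - r ^ 2))
      ≤ (√(1 - a ^ 2) - √(1 - b ^ 2)) * (√(1 - a ^ 2) + √(1 - b ^ 2)) :=
        mul_le_mul_of_nonneg_left (by linarith) (sub_nonneg.2 hst)
    _ = b ^ 2 - a ^ 2 := hdiff

lemma J_strictAntiOn {r : ℝ} (hr : 2 * r ^ 2 < 1) :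
    StrictAntiOn (fun a => J a r) (Set.Icc 0 r) := by
  intro a ⟨ha0, har⟩ b ⟨_, hbr⟩ hab
  have hr0 : 0 ≤ r := ha0.trans har
  have hroots := sqrt_one_sub_sq_sub_sqrt_one_sub_sq_le ha0 hab.le hbr (by linarith)
  set u := √(1 - r ^ 2)
  have hu : 0 < u := sqrt_pos.2 (by linarith)
  have hu2 : u ^ 2 = 1 - r ^ 2 := sq_sqrt (by linarith)
  have hslope : 0 < 2 * u ^ 2 - r * (a + b) := by nlinarith
  have hgap : r * (√(1 - a ^ 2) - √(1 - b ^ 2)) < (b - a) * u :=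
    calc r * (√(1 - a ^ 2) - √(1 - b ^ 2))
        ≤ r * ((b ^ 2 - a ^ 2) / (2 * u)) := mul_le_mul_of_nonneg_left hroots hr0
      _ < (b - a) * u := by
          rw [← mul_div_assoc, div_lt_iff₀ (by positivity)]
          nlinarith [mul_pos (sub_pos.2 hab) hslope]
  have hquot : r * √(1 - a ^ 2) / u - r * √(1 - b ^ 2) / u < b - a := by
    rw [← sub_div, div_lt_iff₀ hu]
    linarith
  simp only [J]
  linarith

lemma J_self {r : ℝ} (hr : r ^ 2 < 1) : J r r = 1 - 2 * r := by
  have hu : √(1 - r ^ 2) ≠ 0 := (sqrt_pos.2 (by linarith)).ne'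
  rw [J, mul_div_cancel_right₀ _ hu]
  ring

/-- For each fixed `0 ≤ r ≤ 1/3`, the function `a ↦ J(a,r)` is strictly decreasing on
`[0,r]`, and `J(a,r) ≥ J(r,r) = 1 − 2r > 0` for all `a ∈ [0,r]`. -/
theorem J_strictAntiOn_and_pos (r : ℝ) (hr0 : 0 ≤ r) (hr : r ≤ 1 / 3) :
    StrictAntiOn (fun a => J a r) (Set.Icc 0 r) ∧
    (∀ a ∈ Set.Icc 0 r, J r r ≤ J a r) ∧
    J r r = 1 - 2 * r ∧
    0 < 1 - 2 * r := by
  have hr2 : r ^ 2 ≤ 1 / 9 := by nlinarith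
  have hanti := J_strictAntiOn (r := r) (by linarith)
  refine ⟨hanti, fun a ha => ?_, J_self (by linarith), by linarith⟩
  exact hanti.antitoneOn ha ⟨hr0, le_rfl⟩ ha.2
end
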